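/- arXiv:2002.05660 — 6 statements merged into one kernel-verified Lean document; each statement's English description precedes it below -/
import Mathlib

section
/- Let a, b, c, d be nonnegative reals summing to 1 with a, b, c, d > 0. Then the quantity ρ = (ad − bc)/√((a+b)(c+d)(a+c)(b+d)) satisfies −√(c/a) ≤ ρ ≤ √(d/b). -/
theorem stmt_6 (a b c d : ℝ) (ha : 0 < a) (hb : 0 < b) (hc : 0 < c) (hd : 0 < d)
    (hsum : a + b + c + d = 1) :
    -Real.sqrt (c / a) ≤ (a * d - b * c) / Real.sqrt ((a + b) * (c + d) * (a + c) * (b + d)) ∧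
    (a * d - b * c) / Real.sqrt ((a + b) * (c + d) * (a + c) * (b + d)) ≤ Real.sqrt (d / b) := by
  set Q := (a + b) * (c + d) * (a + c) * (b + d) with hQ
  have hQpos : 0 < Q := by positivity
  have hS : 0 < Real.sqrt Q := Real.sqrt_pos.mpr hQpos
  constructor
  · rw [neg_le, ← neg_div, div_le_iff₀ hS, neg_sub]
    have h1 : Real.sqrt (c / a) * Real.sqrt Q = Real.sqrt ((c / a) * Q) :=
      (Real.sqrt_mul (by positivity) Q).symm
    rw [h1]
    rcases le_or_gt (b * c - a * d) 0 with h | h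
    · exact h.trans (Real.sqrt_nonneg _)
    · rw [← Real.sqrt_sq h.le]
      apply Real.sqrt_le_sqrt
      rw [div_mul_eq_mul_div, le_div_iff₀ ha]
      have h1' : b * c - a * d ≤ c * (a + b) := by nlinarith [mul_pos ha hd, mul_pos ha hc]
      have h2' : b * c - a * d ≤ c * (b + d) := by nlinarith [mul_pos ha hd, mul_pos hc hd]
      nlinarith [mul_le_mul h1' h2' h.le (by positivity : (0:ℝ) ≤ c * (a + b)),
        mul_pos (mul_pos (mul_pos hc (show (0:ℝ) < a + b by linarith)) (show (0:ℝ) < b + d by linarith)) (show (0:ℝ) < a*d + c*d + c^2 by positivity), ha.le]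
  · rw [div_le_iff₀ hS]
    have h1 : Real.sqrt (d / b) * Real.sqrt Q = Real.sqrt ((d / b) * Q) :=
      (Real.sqrt_mul (by positivity) Q).symm
    rw [h1]
    rcases le_or_gt (a * d - b * c) 0 with h | h
    · exact h.trans (Real.sqrt_nonneg _)
    · rw [← Real.sqrt_sq h.le]
      apply Real.sqrt_le_sqrt
      rw [div_mul_eq_mul_div, le_div_iff₀ hb]
      have h1' : a * d - b * c ≤ d * (a + b) := by nlinarith [mul_pos hb hc, mul_pos hb hd]
      have h2' : a * d - b * c ≤ d * (a + c) := by nlinarith [mul_pos hb hc, mul_pos hc hd]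
      nlinarith [mul_le_mul h1' h2' h.le (by positivity : (0:ℝ) ≤ d * (a + b)),
        mul_pos (mul_pos (mul_pos hd (show (0:ℝ) < a + b by linarith)) (show (0:ℝ) < a + c by linarith)) (show (0:ℝ) < b*c + c*d + d^2 by positivity), hb.le]
end

section
/- Let a,b,c,d > 0 sum to 1. Then the Pearson correlation ρ = (ad−bc)/√((a+b)(c+d)(a+c)(b+d)) satisfies |ρ| ≤ max{√(c/a), √(d/b)}. -/
theorem stmt_7 (a b c d : ℝ) (ha : 0 < a) (hb : 0 < b) (hc : 0 < c) (hd : 0 < d)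
    (hsum : a + b + c + d = 1) :
    |(a * d - b * c) / Real.sqrt ((a + b) * (c + d) * (a + c) * (b + d))| ≤
      max (Real.sqrt (c / a)) (Real.sqrt (d / b)) := by
  have hP : 0 < (a + b) * (c + d) * (a + c) * (b + d) := by positivity
  have hS : 0 < Real.sqrt ((a + b) * (c + d) * (a + c) * (b + d)) := Real.sqrt_pos.mpr hP
  have hmono : Monotone Real.sqrt := fun x y h => Real.sqrt_le_sqrt h
  rw [abs_div, abs_of_pos hS, div_le_iff₀ hS, ← hmono.map_max,
    ← Real.sqrt_mul (le_max_iff.mpr (Or.inl (by positivity)))]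
  rw [show |a * d - b * c| = Real.sqrt ((a * d - b * c) ^ 2) by
    rw [Real.sqrt_sq_eq_abs]]
  apply Real.sqrt_le_sqrt
  have hprod1 : b * c * a * b ≤ (a + b) * (c + d) * (a + c) * (b + d) := by
    gcongr <;> linarith
  have hprod2 : a * d * b * a ≤ (a + b) * (c + d) * (a + c) * (b + d) := by
    have : a * d * b * a = a * d * a * b := by ring
    rw [this]; gcongr <;> linarith
  rcases le_total (d / b) (c / a) with h | h
  · rw [max_eq_left h]
    have hbc : a * d ≤ b * c := by
      rw [div_le_div_iff₀ hb ha] at h; nlinarith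
    rw [div_mul_eq_mul_div, le_div_iff₀ ha]
    have h2 : (a * d - b * c) ^ 2 ≤ (b * c) ^ 2 := by
      have e : (a * d - b * c) ^ 2 = (b * c - a * d) ^ 2 := by ring
      rw [e]; exact pow_le_pow_left₀ (by linarith) (by nlinarith) 2
    nlinarith [mul_le_mul_of_nonneg_left hprod1 hc.le,
      mul_le_mul_of_nonneg_right h2 ha.le]
  · rw [max_eq_right h]
    have hbc : b * c ≤ a * d := by
      rw [div_le_div_iff₀ ha hb] at h; nlinarith
    rw [div_mul_eq_mul_div, le_div_iff₀ hb]
    have h2 : (a * d - b * c) ^ 2 ≤ (a * d) ^ 2 := by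
      exact pow_le_pow_left₀ (by linarith) (by nlinarith) 2
    nlinarith [mul_le_mul_of_nonneg_left hprod2 hd.le,
      mul_le_mul_of_nonneg_right h2 hb.le]
end

section
/- Let a,b,c,d ≥ 0 and v, τ > 0 with c + d ≤ τ, a + c ≥ v, b + d ≥ v, τ < v, and a, b, c, d not all zero with a+b, c+d, a+c, b+d > 0. Then |(ad−bc)/√((a+b)(c+d)(a+c)(b+d))| ≤ √(τ/(v−τ)). -/
lemma key_8 (a b c d v τ : ℝ) (ha : 0 ≤ a) (hb : 0 ≤ b) (hc : 0 ≤ c) (hd : 0 ≤ d)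
    (hτ : 0 < τ) (hcd : c + d ≤ τ) (hbd : v ≤ b + d)
    (hτv : τ < v) (hwlog : b + d ≤ a + c) :
    (a * d - b * c) ^ 2 * (v - τ) ≤ τ * ((a + b) * (c + d) * (a + c) * (b + d)) := by
  have hb' : v - τ ≤ b := by linarith
  have h1 : (a * d - b * c) ^ 2 ≤ ((c + d) * (a + c)) ^ 2 := by
    have hu : a * d - b * c ≤ (c + d) * (a + c) := by nlinarith [mul_nonneg hb hc, mul_nonneg hc ha, mul_nonneg hc hc, mul_nonneg hc hd]
    have hl : -((c + d) * (a + c)) ≤ a * d - b * c := by nlinarith [mul_nonneg ha hd, mul_nonneg hc ha, mul_nonneg hc hc, mul_nonneg hd hd, mul_nonneg hb hc, mul_nonneg hd hc]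
    nlinarith [sq_nonneg (a * d - b * c), sq_nonneg ((c+d)*(a+c))]
  have h2 : (a + c) * (v - τ) ≤ (a + b) * (b + d) := by
    nlinarith [mul_nonneg ha hd, mul_nonneg hb hb, mul_nonneg hb hd, mul_nonneg ha hb,
      mul_le_mul_of_nonneg_left hb' (le_of_lt hτ)]
  have h3 : (c + d) * ((a + c) * (v - τ)) ≤ τ * ((a + b) * (b + d)) :=
    mul_le_mul hcd h2 (by nlinarith) (le_of_lt hτ)
  calc (a * d - b * c) ^ 2 * (v - τ) ≤ ((c + d) * (a + c)) ^ 2 * (v - τ) := by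
        apply mul_le_mul_of_nonneg_right h1; linarith
    _ ≤ τ * ((a + b) * (c + d) * (a + c) * (b + d)) := by nlinarith [mul_nonneg (add_nonneg hc hd) (add_nonneg ha hc)]

theorem stmt_8 (a b c d v τ : ℝ) (ha : 0 ≤ a) (hb : 0 ≤ b) (hc : 0 ≤ c) (hd : 0 ≤ d)
    (hv : 0 < v) (hτ : 0 < τ) (hcd : c + d ≤ τ) (hac : v ≤ a + c) (hbd : v ≤ b + d)
    (hτv : τ < v) (hab : 0 < a + b) (hcd' : 0 < c + d) (hac' : 0 < a + c) (hbd' : 0 < b + d) :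
    |(a * d - b * c) / Real.sqrt ((a + b) * (c + d) * (a + c) * (b + d))| ≤
      Real.sqrt (τ / (v - τ)) := by
  set D := (a + b) * (c + d) * (a + c) * (b + d) with hD
  have hDpos : 0 < D := by positivity
  have hK : (a * d - b * c) ^ 2 * (v - τ) ≤ τ * D := by
    rcases le_total (b + d) (a + c) with h | h
    · exact key_8 a b c d v τ ha hb hc hd hτ hcd hbd hτv h
    · have := key_8 b a d c v τ hb ha hd hc hτ (by linarith) hac hτv h
      calc (a * d - b * c) ^ 2 * (v - τ) = (b * c - a * d) ^ 2 * (v - τ) := by ring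
        _ ≤ τ * ((b + a) * (d + c) * (b + d) * (a + c)) := this
        _ = τ * D := by rw [hD]; ring
  have hvτ : 0 < v - τ := by linarith
  have hsq : ((a * d - b * c) / Real.sqrt D) ^ 2 ≤ τ / (v - τ) := by
    rw [div_pow, Real.sq_sqrt (le_of_lt hDpos)]
    rw [div_le_div_iff₀ hDpos hvτ]
    linarith
  calc |(a * d - b * c) / Real.sqrt D| = Real.sqrt (((a * d - b * c) / Real.sqrt D) ^ 2) := by
        rw [Real.sqrt_sq_eq_abs]
    _ ≤ Real.sqrt (τ / (v - τ)) := Real.sqrt_le_sqrt hsq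
end

section
/- Let a,b,c,d > 0 with a+b+c+d = 1, and let â,b̂,ĉ,d̂ > 0 with â+b̂+ĉ+d̂ = 1 and |â−a|, |b̂−b|, |ĉ−c|, |d̂−d| all at most τ for some τ ∈ (0, min{a,b,c,d}). Define ρ = (ad−bc)/√((a+b)(c+d)(a+c)(b+d)) and ρ̂ analogously. Then |ρ̂ − ρ| ≤ 4τ/√((a+b)(c+d)(a+c)(b+d)). -/
lemma key_aux (u v uh vh M s : ℝ) (hu : 0 < u) (hv : 0 < v) (huh : 0 < uh) (hvh : 0 < vh)
    (hs : 0 ≤ s) (hM0 : 0 ≤ M) (hMu : M ≤ uh) (hMv : M ≤ vh)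
    (h1 : |uh - u| ≤ s) (h2 : |vh - v| ≤ s) (hvu : v ≤ u) :
    M * |uh * vh - u * v| ≤ s * (uh * vh + Real.sqrt (u * v) * Real.sqrt (uh * vh)) := by
  have hMrt : M ≤ Real.sqrt (uh * vh) := by
    have h := Real.sqrt_le_sqrt (show M * M ≤ uh * vh by nlinarith)
    rwa [Real.sqrt_mul_self hM0] at h
  have hvrt : v ≤ Real.sqrt (u * v) := by
    have h := Real.sqrt_le_sqrt (show v * v ≤ u * v by nlinarith)
    rwa [Real.sqrt_mul_self hv.le] at h
  have habs : |uh * vh - u * v| ≤ uh * |vh - v| + v * |uh - u| := by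
    have h : uh * vh - u * v = uh * (vh - v) + v * (uh - u) := by ring
    rw [h]
    calc |uh * (vh - v) + v * (uh - u)| ≤ |uh * (vh - v)| + |v * (uh - u)| := abs_add_le _ _
      _ = uh * |vh - v| + v * |uh - u| := by
          rw [abs_mul, abs_mul, abs_of_pos huh, abs_of_pos hv]
  have hrtpos : (0:ℝ) ≤ Real.sqrt (uh * vh) := Real.sqrt_nonneg _
  calc M * |uh * vh - u * v| ≤ M * (uh * |vh - v| + v * |uh - u|) :=
        mul_le_mul_of_nonneg_left habs hM0
    _ ≤ M * (uh * s + v * s) := by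
        have t : uh * |vh - v| + v * |uh - u| ≤ uh * s + v * s :=
          add_le_add (mul_le_mul_of_nonneg_left h2 huh.le)
            (mul_le_mul_of_nonneg_left h1 hv.le)
        exact mul_le_mul_of_nonneg_left t hM0
    _ = (M * uh) * s + (M * v) * s := by ring
    _ ≤ (vh * uh) * s + (Real.sqrt (uh * vh) * Real.sqrt (u * v)) * s := by
        have t1 : M * uh ≤ vh * uh := mul_le_mul_of_nonneg_right hMv huh.le
        have t2 : M * v ≤ Real.sqrt (uh * vh) * Real.sqrt (u * v) :=
          mul_le_mul hMrt hvrt hv.le hrtpos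
        have := add_le_add (mul_le_mul_of_nonneg_right t1 hs)
          (mul_le_mul_of_nonneg_right t2 hs)
        linarith
    _ = s * (uh * vh + Real.sqrt (u * v) * Real.sqrt (uh * vh)) := by ring

lemma key_lem (u v uh vh M s : ℝ) (hu : 0 < u) (hv : 0 < v) (huh : 0 < uh) (hvh : 0 < vh)
    (hs : 0 ≤ s) (hM0 : 0 ≤ M) (hMu : M ≤ uh) (hMv : M ≤ vh)
    (h1 : |uh - u| ≤ s) (h2 : |vh - v| ≤ s) :
    M * |uh * vh - u * v| ≤ s * (uh * vh + Real.sqrt (u * v) * Real.sqrt (uh * vh)) := by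
  rcases le_total v u with h | h
  · exact key_aux u v uh vh M s hu hv huh hvh hs hM0 hMu hMv h1 h2 h
  · have := key_aux v u vh uh M s hv hu hvh huh hs hM0 hMv hMu h2 h1 h
    rw [mul_comm vh uh, mul_comm v u] at this
    exact this


lemma prod_abs_le (x y s : ℝ) (hx1 : -s ≤ x) (hx2 : x ≤ s) (hy1 : -1 ≤ y) (hy2 : y ≤ 1) :
    |x * y| ≤ s := by
  have hs : 0 ≤ s := by linarith
  calc |x * y| = |x| * |y| := abs_mul _ _
    _ ≤ s * 1 := mul_le_mul (abs_le.mpr ⟨hx1, hx2⟩) (abs_le.mpr ⟨hy1, hy2⟩)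
        (abs_nonneg _) hs
    _ = s := mul_one s

set_option maxHeartbeats 1600000 in
theorem stmt_10 (a b c d ah bh ch dh τ : ℝ)
    (ha : 0 < a) (hb : 0 < b) (hc : 0 < c) (hd : 0 < d) (hsum : a + b + c + d = 1)
    (hah : 0 < ah) (hbh : 0 < bh) (hch : 0 < ch) (hdh : 0 < dh)
    (hsumh : ah + bh + ch + dh = 1)
    (hτ0 : 0 < τ) (hτ : τ < min (min a b) (min c d))
    (h1 : |ah - a| ≤ τ) (h2 : |bh - b| ≤ τ) (h3 : |ch - c| ≤ τ) (h4 : |dh - d| ≤ τ) :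
    |(ah * dh - bh * ch) / Real.sqrt ((ah + bh) * (ch + dh) * (ah + ch) * (bh + dh)) -
      (a * d - b * c) / Real.sqrt ((a + b) * (c + d) * (a + c) * (b + d))| ≤
      4 * τ / Real.sqrt ((a + b) * (c + d) * (a + c) * (b + d)) := by
  rw [abs_le] at h1 h2 h3 h4
  obtain ⟨h1l, h1r⟩ := h1
  obtain ⟨h2l, h2r⟩ := h2
  obtain ⟨h3l, h3r⟩ := h3
  obtain ⟨h4l, h4r⟩ := h4
  -- perturbation bounds on the marginal products
  have hDu : |(ah + bh) * (ch + dh) - (a + b) * (c + d)| ≤ 2 * τ := by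
    have hident : (ah + bh) * (ch + dh) - (a + b) * (c + d) =
        ((ah + bh) - (a + b)) * (1 - (ah + bh) - (a + b)) := by
      linear_combination (ah + bh) * hsumh - (a + b) * hsum
    rw [hident]
    exact prod_abs_le _ _ _ (by linarith) (by linarith) (by linarith) (by linarith)
  have hDv : |(ah + ch) * (bh + dh) - (a + c) * (b + d)| ≤ 2 * τ := by
    have hident : (ah + ch) * (bh + dh) - (a + c) * (b + d) =
        ((ah + ch) - (a + c)) * (1 - (ah + ch) - (a + c)) := by
      linear_combination (ah + ch) * hsumh - (a + c) * hsum
    rw [hident]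
    exact prod_abs_le _ _ _ (by linarith) (by linarith) (by linarith) (by linarith)
  -- |Nh| bounded by both marginal products
  have hNh_u : |ah * dh - bh * ch| ≤ (ah + bh) * (ch + dh) := by
    rw [abs_le]
    constructor <;> nlinarith [mul_pos hah hch, mul_pos hbh hdh, mul_pos hah hdh,
      mul_pos hbh hch]
  have hNh_v : |ah * dh - bh * ch| ≤ (ah + ch) * (bh + dh) := by
    rw [abs_le]
    constructor <;> nlinarith [mul_pos hah hbh, mul_pos hch hdh, mul_pos hah hdh,
      mul_pos hbh hch]
  -- |Nh - N| ≤ 2τ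
  have hNN : |(ah * dh - bh * ch) - (a * d - b * c)| ≤ 2 * τ := by
    rw [abs_le]
    constructor
    · nlinarith [mul_nonneg hah.le (show (0:ℝ) ≤ τ + (dh - d) by linarith),
        mul_nonneg hd.le (show (0:ℝ) ≤ τ + (ah - a) by linarith),
        mul_nonneg hbh.le (show (0:ℝ) ≤ τ - (ch - c) by linarith),
        mul_nonneg hc.le (show (0:ℝ) ≤ τ - (bh - b) by linarith),
        mul_nonneg hτ0.le (show (0:ℝ) ≤ 1 - ah - bh by linarith),
        mul_nonneg hτ0.le (show (0:ℝ) ≤ 1 - c - d by linarith)]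
    · nlinarith [mul_nonneg hah.le (show (0:ℝ) ≤ τ - (dh - d) by linarith),
        mul_nonneg hd.le (show (0:ℝ) ≤ τ - (ah - a) by linarith),
        mul_nonneg hbh.le (show (0:ℝ) ≤ τ + (ch - c) by linarith),
        mul_nonneg hc.le (show (0:ℝ) ≤ τ + (bh - b) by linarith),
        mul_nonneg hτ0.le (show (0:ℝ) ≤ 1 - ah - bh by linarith),
        mul_nonneg hτ0.le (show (0:ℝ) ≤ 1 - c - d by linarith)]
  rw [show (a + b) * (c + d) * (a + c) * (b + d)
        = ((a + b) * (c + d)) * ((a + c) * (b + d)) by ring,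
      show (ah + bh) * (ch + dh) * (ah + ch) * (bh + dh)
        = ((ah + bh) * (ch + dh)) * ((ah + ch) * (bh + dh)) by ring]
  set u : ℝ := (a + b) * (c + d) with hu_def
  set v : ℝ := (a + c) * (b + d) with hv_def
  set uh : ℝ := (ah + bh) * (ch + dh) with huh_def
  set vh : ℝ := (ah + ch) * (bh + dh) with hvh_def
  set N : ℝ := a * d - b * c with hN_def
  set Nh : ℝ := ah * dh - bh * ch with hNh_def
  have hu : 0 < u := by rw [hu_def]; positivity
  have hv : 0 < v := by rw [hv_def]; positivity
  have huh : 0 < uh := by rw [huh_def]; positivity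
  have hvh : 0 < vh := by rw [hvh_def]; positivity
  set S : ℝ := Real.sqrt (u * v) with hS_def
  set Sh : ℝ := Real.sqrt (uh * vh) with hSh_def
  have hS : 0 < S := Real.sqrt_pos.mpr (by positivity)
  have hSh : 0 < Sh := Real.sqrt_pos.mpr (by positivity)
  have hS2 : S * S = u * v := Real.mul_self_sqrt (by positivity)
  have hSh2 : Sh * Sh = uh * vh := Real.mul_self_sqrt (by positivity)
  have hkey : |Nh| * |uh * vh - u * v| ≤ (2 * τ) * (uh * vh + S * Sh) :=
    key_lem u v uh vh |Nh| (2 * τ) hu hv huh hvh (by linarith) (abs_nonneg _) hNh_u hNh_v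
      hDu hDv
  -- deduce |Nh| * |Sh - S| ≤ 2τ * Sh
  have hfac : |uh * vh - u * v| = |Sh - S| * (Sh + S) := by
    have h : uh * vh - u * v = (Sh - S) * (Sh + S) := by
      rw [← hS2, ← hSh2]; ring
    rw [h, abs_mul, abs_of_pos (by linarith : (0:ℝ) < Sh + S)]
  have hkey2 : |Nh| * |Sh - S| ≤ 2 * τ * Sh := by
    have hpos : 0 < Sh + S := by linarith
    rw [hfac] at hkey
    have h' : (2 * τ) * (uh * vh + S * Sh) = (2 * τ * Sh) * (Sh + S) := by
      rw [← hSh2]; ring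
    rw [h', ← mul_assoc] at hkey
    exact le_of_mul_le_mul_right hkey hpos
  -- final assembly
  have heq : Nh / Sh - N / S = ((Nh - N) * Sh + Nh * (S - Sh)) / (S * Sh) := by
    field_simp
    ring
  rw [heq, abs_div, abs_of_pos (mul_pos hS hSh), div_le_div_iff₀ (by positivity) hS]
  have hnum : |(Nh - N) * Sh + Nh * (S - Sh)| ≤ 2 * τ * Sh + 2 * τ * Sh := by
    calc |(Nh - N) * Sh + Nh * (S - Sh)| ≤ |(Nh - N) * Sh| + |Nh * (S - Sh)| := abs_add_le _ _
      _ = |Nh - N| * Sh + |Nh| * |Sh - S| := by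
          rw [abs_mul, abs_mul, abs_of_pos hSh, abs_sub_comm S Sh]
      _ ≤ 2 * τ * Sh + 2 * τ * Sh := by
          have := mul_le_mul_of_nonneg_right hNN hSh.le
          linarith [hkey2]
  calc |(Nh - N) * Sh + Nh * (S - Sh)| * S ≤ (2 * τ * Sh + 2 * τ * Sh) * S :=
        mul_le_mul_of_nonneg_right hnum hS.le
    _ = 4 * τ * (S * Sh) := by ring
end

section
/- Let c* be a conjunction on {0,1}^n, let μ be a distribution on {0,1}^n supported on points satisfying c*, and let h be the largest consistent conjunction of m i.i.d. samples x_1,...,x_m from μ. Then the expected μ-probability that a fresh sample x satisfies h(x)=0 is at most 2n/(m+1). -/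
open MeasureTheory

/-- A point `x : Fin n → Bool` satisfies a conjunction given by a set of
literals `L ⊆ Fin n × Bool` iff every literal `(j, b) ∈ L` holds: `x j = b`. -/
def SatisfiesConj {n : ℕ} (L : Set (Fin n × Bool)) (x : Fin n → Bool) : Prop :=
  ∀ p ∈ L, x p.1 = p.2

/-- The largest conjunction consistent with the samples `x 0, ..., x (m-1)`:
all literals satisfied by every sample. -/
def LargestConsistent {n m : ℕ} (x : Fin m → Fin n → Bool) : Set (Fin n × Bool) :=
  {p : Fin n × Bool | ∀ i, x i p.1 = p.2}

/-! For a literal `ℓ`, a fresh point `y` violates the learned conjunction through `ℓ` only if all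
`m` samples satisfy `ℓ` while `y` does not. Writing `q = μ ℓ`, this has probability
`q ^ m * (1 - q) ≤ 1 / (m + 1)`, because `(m + 1) q ^ m ≤ 1 + q + ⋯ + q ^ m` and
`(1 + q + ⋯ + q ^ m) (1 - q) = 1 - q ^ (m + 1)`. A union bound over the `2 n` literals concludes. -/

open scoped ENNReal NNReal
open Finset

theorem NNReal.pow_mul_one_sub_mul_succ_le_one {q : ℝ≥0} (hq : q ≤ 1) (m : ℕ) :
    q ^ m * (1 - q) * (m + 1) ≤ 1 :=
  calc q ^ m * (1 - q) * (m + 1) = (#(range (m + 1)) • q ^ m) * (1 - q) := by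
        rw [card_range, nsmul_eq_mul]; push_cast; ring
    _ ≤ (∑ i ∈ range (m + 1), q ^ i) * (1 - q) := by
        gcongr
        exact card_nsmul_le_sum _ _ _ fun i hi ↦
          pow_le_pow_of_le_one zero_le hq (Nat.lt_succ_iff.mp (mem_range.mp hi))
    _ = 1 - q ^ (m + 1) := geom_sum_mul_of_le_one hq _
    _ ≤ 1 := tsub_le_self

theorem ENNReal.pow_mul_one_sub_le_inv {q : ℝ≥0∞} (hq : q ≤ 1) (m : ℕ) :
    q ^ m * (1 - q) ≤ ((m : ℝ≥0∞) + 1)⁻¹ := by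
  lift q to ℝ≥0 using ne_top_of_le_ne_top one_ne_top hq
  rw [ENNReal.le_inv_iff_mul_le]
  exact_mod_cast NNReal.pow_mul_one_sub_mul_succ_le_one (by exact_mod_cast hq) m

namespace MeasureTheory

variable {α ι : Type*} [MeasurableSpace α] [Fintype ι] {μ : Measure α} [IsProbabilityMeasure μ]
  {s : Set α}

theorem lintegral_measure_forall_mem_and_notMem_le (hs : MeasurableSet s) :
    ∫⁻ X : ι → α, μ {y | (∀ i, X i ∈ s) ∧ y ∉ s} ∂(Measure.pi fun _ ↦ μ) ≤
      ((Fintype.card ι : ℝ≥0∞) + 1)⁻¹ := by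
  have hind : ∀ X : ι → α,
      μ {y | (∀ i, X i ∈ s) ∧ y ∉ s} = (Set.univ.pi fun _ ↦ s).indicator (fun _ ↦ μ sᶜ) X := by
    intro X
    by_cases hX : ∀ i, X i ∈ s
    · simp [hX, Set.compl_def]
    · simp [hX]
  calc ∫⁻ X : ι → α, μ {y | (∀ i, X i ∈ s) ∧ y ∉ s} ∂(Measure.pi fun _ ↦ μ)
      = μ sᶜ * Measure.pi (fun _ ↦ μ) (Set.univ.pi fun _ ↦ s) := by
        simp_rw [hind]
        rw [lintegral_indicator_const (MeasurableSet.univ_pi fun _ ↦ hs)]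
    _ = μ s ^ Fintype.card ι * (1 - μ s) := by
        rw [Measure.pi_pi, prod_const, card_univ, prob_compl_eq_one_sub hs, mul_comm]
    _ ≤ _ := ENNReal.pow_mul_one_sub_le_inv prob_le_one _

end MeasureTheory

def literal {n : ℕ} (p : Fin n × Bool) : Set (Fin n → Bool) := {x | x p.1 = p.2}

theorem setOf_not_satisfiesConj_largestConsistent {n m : ℕ} (X : Fin m → Fin n → Bool) :
    {y | ¬ SatisfiesConj (LargestConsistent X) y} =
      ⋃ p, {y | (∀ i, X i ∈ literal p) ∧ y ∉ literal p} := by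
  ext y
  simp only [Set.mem_ofPred_eq, Set.mem_iUnion, SatisfiesConj, LargestConsistent, literal,
    not_forall, exists_prop]

theorem stmt_13_general (n m : ℕ) (μ : Measure (Fin n → Bool)) [IsProbabilityMeasure μ] :
    (∫⁻ X : Fin m → (Fin n → Bool),
        μ {y | ¬ SatisfiesConj (LargestConsistent X) y}
        ∂(Measure.pi fun _ : Fin m => μ)) ≤
      ENNReal.ofReal (2 * n / (m + 1)) := by
  calc ∫⁻ X, μ {y | ¬ SatisfiesConj (LargestConsistent X) y} ∂(Measure.pi fun _ ↦ μ)
      ≤ ∫⁻ X, ∑ p, μ {y | (∀ i, X i ∈ literal p) ∧ y ∉ literal p} ∂(Measure.pi fun _ ↦ μ) :=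
        lintegral_mono fun X ↦ by
          rw [setOf_not_satisfiesConj_largestConsistent]
          exact measure_iUnion_fintype_le _ _
    _ = ∑ p, ∫⁻ X, μ {y | (∀ i, X i ∈ literal p) ∧ y ∉ literal p} ∂(Measure.pi fun _ ↦ μ) :=
        lintegral_finsetSum _ fun _ _ ↦ measurable_of_countable _
    _ ≤ ∑ _p : Fin n × Bool, ((m : ℝ≥0∞) + 1)⁻¹ := by
        gcongr with p
        simpa using lintegral_measure_forall_mem_and_notMem_le (ι := Fin m) (μ := μ)
          (Set.toFinite (literal p)).measurableSet
    _ = ENNReal.ofReal (2 * n / (m + 1)) := by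
        rw [ENNReal.ofReal_div_of_pos (by positivity)]
        simp [ENNReal.div_eq_inv_mul, mul_comm, ENNReal.ofReal_add]

theorem stmt_13 (n m : ℕ) (μ : Measure (Fin n → Bool)) [IsProbabilityMeasure μ]
    (cstar : Set (Fin n × Bool)) (hsupp : ∀ᵐ x ∂μ, SatisfiesConj cstar x) :
    (∫⁻ X : Fin m → (Fin n → Bool),
        μ {y | ¬ SatisfiesConj (LargestConsistent X) y}
        ∂(Measure.pi fun _ : Fin m => μ)) ≤
      ENNReal.ofReal (2 * n / (m + 1)) :=
  stmt_13_general n m μ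
end

section
/- Let a,b,c,d > 0 with a+b+c+d = 1. Then the Pearson correlation ρ = (ad−bc)/√((a+b)(c+d)(a+c)(b+d)) can be rewritten as ρ = √( (a/(a+b))·(d/(c+d))·(a/(a+c))·(d/(b+d)) ) − √( (b/(a+b))·(c/(c+d))·(c/(a+c))·(b/(b+d)) ). -/
theorem Real.sqrt_sq_div {x : ℝ} (hx : 0 ≤ x) (y : ℝ) : √(x ^ 2 / y) = x / √y := by
  rw [Real.sqrt_div (sq_nonneg x), Real.sqrt_sq hx]

theorem div_mul_div_mul_div_mul_div {K : Type*} [DivisionCommMonoid K] (x y z w p q r s : K) :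
    x / p * (y / q) * (z / r) * (w / s) = x * y * z * w / (p * q * r * s) := by
  simp only [div_mul_div_comm]

theorem div_sqrt_margins_eq_sqrt_sub_sqrt {a b c d : ℝ} (had : 0 ≤ a * d) (hbc : 0 ≤ b * c) :
    (a * d - b * c) / √((a + b) * (c + d) * (a + c) * (b + d)) =
      √((a / (a + b)) * (d / (c + d)) * (a / (a + c)) * (d / (b + d))) -
      √((b / (a + b)) * (c / (c + d)) * (c / (a + c)) * (b / (b + d))) := by
  rw [div_mul_div_mul_div_mul_div, div_mul_div_mul_div_mul_div,
    show a * d * a * d = (a * d) ^ 2 by ring, show b * c * c * b = (b * c) ^ 2 by ring,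
    Real.sqrt_sq_div had, Real.sqrt_sq_div hbc, sub_div]

theorem stmt_18_general (a b c d : ℝ) (ha : 0 < a) (hb : 0 < b) (hc : 0 < c) (hd : 0 < d) :
    (a * d - b * c) / Real.sqrt ((a + b) * (c + d) * (a + c) * (b + d)) =
      Real.sqrt ((a / (a + b)) * (d / (c + d)) * (a / (a + c)) * (d / (b + d))) -
      Real.sqrt ((b / (a + b)) * (c / (c + d)) * (c / (a + c)) * (b / (b + d))) :=
  div_sqrt_margins_eq_sqrt_sub_sqrt (by positivity) (by positivity)

theorem stmt_18 (a b c d : ℝ) (ha : 0 < a) (hb : 0 < b) (hc : 0 < c) (hd : 0 < d)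
    (hsum : a + b + c + d = 1) :
    (a * d - b * c) / Real.sqrt ((a + b) * (c + d) * (a + c) * (b + d)) =
      Real.sqrt ((a / (a + b)) * (d / (c + d)) * (a / (a + c)) * (d / (b + d))) -
      Real.sqrt ((b / (a + b)) * (c / (c + d)) * (c / (a + c)) * (b / (b + d))) :=
  stmt_18_general a b c d ha hb hc hd
end
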